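/- arXiv:1701.08577 — 6 statements merged into one kernel-verified Lean document; each statement's English description precedes it below -/
import Mathlib

section
/- For every integer n ≥ 1 and every angle 0 < β < π there exists a natural number q = q(n,β) with the following property: every finite set A ⊆ ℝⁿ with at least q points contains three distinct points a, b, c such that the angle at b between the vectors a − b and c − b is at least β (and at most π). -/
/-!
Cover the unit sphere by finitely many balls of radius `sin (ε / 2)` and color an ordered pair
`(x, y)` of points of `A` by a ball containing the direction of `x - y`. Once `A` has more than
`2 ^ (number of balls)` points, two points `x ≠ y` have the same set of colors of pairs starting
at them, so the color of `(x, y)` is also the color of some `(y, z)`. Then `x - y` and `y - z`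
make an angle less than `ε`, i.e. `∠ x y z > π - ε`.
-/

open Metric NormedSpace InnerProductGeometry Real

theorem Finset.exists_consecutive_pairs_map_eq_of_two_pow_card_lt {α γ : Type*}
    {A : Finset α} {t : Finset γ} (c : α → α → γ)
    (hc : ∀ x ∈ A, ∀ y ∈ A, x ≠ y → c x y ∈ t) (hA : 2 ^ t.card < A.card) :
    ∃ x ∈ A, ∃ y ∈ A, ∃ z ∈ A, x ≠ y ∧ y ≠ z ∧ c x y = c y z := by
  classical
  obtain ⟨x, hx, y, hy, hxy, hcolors⟩ :=
    exists_ne_map_eq_of_card_lt_of_maps_to (t := t.powerset) (f := fun x => (A.erase x).image (c x))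
      (by rwa [card_powerset]) fun x hx => mem_powerset.2 fun w hw => by
        obtain ⟨y, hy, rfl⟩ := mem_image.1 hw
        exact hc x hx y (mem_of_mem_erase hy) (ne_of_mem_erase hy).symm
  have hxy_mem : c x y ∈ (A.erase y).image (c y) :=
    hcolors ▸ mem_image_of_mem _ (mem_erase.2 ⟨hxy.symm, hy⟩)
  obtain ⟨z, hz, hcz⟩ := mem_image.1 hxy_mem
  exact ⟨x, hx, y, hy, z, mem_of_mem_erase hz, hxy, (ne_of_mem_erase hz).symm, hcz.symm⟩

theorem exists_finset_coloring_sphere_norm_sub_lt {V : Type*} [SeminormedAddCommGroup V]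
    [ProperSpace V] {r : ℝ} (hr : 0 < r) :
    ∃ (t : Finset V) (c : V → V), (∀ v ∈ sphere (0 : V) 1, c v ∈ t) ∧
      ∀ u ∈ sphere (0 : V) 1, ∀ v ∈ sphere (0 : V) 1, c u = c v → ‖u - v‖ < 2 * r := by
  obtain ⟨t, ht⟩ := (isCompact_sphere (0 : V) 1).elim_finite_subcover (fun w => ball w r)
    (fun _ => isOpen_ball) fun v _ => Set.mem_iUnion.2 ⟨v, mem_ball_self hr⟩
  have hcover : ∀ v ∈ sphere (0 : V) 1, ∃ w ∈ t, dist v w < r := fun v hv => by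
    simpa using ht hv
  choose! c hct hcdist using hcover
  refine ⟨t, c, hct, fun u hu v hv huv => ?_⟩
  have hv' := hcdist v hv
  rw [← huv] at hv'
  calc ‖u - v‖ = dist u v := (dist_eq_norm u v).symm
    _ ≤ dist u (c u) + dist v (c u) := dist_triangle_right _ _ _
    _ < 2 * r := by linarith [hcdist u hu]

variable {V : Type*} [NormedAddCommGroup V] [InnerProductSpace ℝ V]

theorem InnerProductGeometry.norm_sub_eq_two_mul_sin_half_angle {u v : V} (hu : ‖u‖ = 1)
    (hv : ‖v‖ = 1) : ‖u - v‖ = 2 * sin (angle u v / 2) := by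
  have hsin : 0 ≤ sin (angle u v / 2) := sin_nonneg_of_nonneg_of_le_pi
    (by linarith [angle_nonneg u v]) (by linarith [angle_le_pi u v, pi_pos])
  refine (pow_left_inj₀ (norm_nonneg _) (by positivity) two_ne_zero).1 ?_
  rw [sq, norm_sub_sq_eq_norm_sq_add_norm_sq_sub_two_mul_norm_mul_norm_mul_cos_angle, hu, hv,
    mul_pow, sin_sq_eq_half_sub, mul_div_cancel₀ _ two_ne_zero]
  ring

theorem InnerProductGeometry.angle_lt_of_norm_sub_lt {u v : V} (hu : ‖u‖ = 1) (hv : ‖v‖ = 1)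
    {ε : ℝ} (hε0 : 0 ≤ ε) (hεπ : ε ≤ π) (h : ‖u - v‖ < 2 * sin (ε / 2)) : angle u v < ε := by
  rw [norm_sub_eq_two_mul_sin_half_angle hu hv] at h
  have := (strictMonoOn_sin.lt_iff_lt (a := angle u v / 2) (b := ε / 2)
    ⟨by linarith [angle_nonneg u v, pi_pos], by linarith [angle_le_pi u v]⟩
    ⟨by linarith [pi_pos], by linarith⟩).1 (by linarith)
  linarith

theorem exists_card_le_imp_exists_angle_sub_sub_lt [ProperSpace V] {ε : ℝ} (hε : 0 < ε) :
    ∃ q : ℕ, ∀ A : Finset V, q ≤ A.card →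
      ∃ x ∈ A, ∃ y ∈ A, ∃ z ∈ A, x ≠ y ∧ y ≠ z ∧ x ≠ z ∧ angle (x - y) (y - z) < ε := by
  wlog hεπ : ε ≤ π generalizing ε
  · obtain ⟨q, hq⟩ := this pi_pos le_rfl
    refine ⟨q, fun A hA => ?_⟩
    obtain ⟨x, hx, y, hy, z, hz, hxy, hyz, hxz, hangle⟩ := hq A hA
    exact ⟨x, hx, y, hy, z, hz, hxy, hyz, hxz, hangle.trans (not_le.1 hεπ)⟩
  obtain ⟨t, c, hct, hclose⟩ := exists_finset_coloring_sphere_norm_sub_lt (V := V)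
    (sin_pos_of_pos_of_lt_pi (half_pos hε) (by linarith [pi_pos]))
  have hdir : ∀ x y : V, x ≠ y → normalize (x - y) ∈ sphere (0 : V) 1 := fun x y h => by
    simpa [norm_normalize_eq_one_iff, sub_ne_zero] using h
  refine ⟨2 ^ t.card + 1, fun A hA => ?_⟩
  obtain ⟨x, hx, y, hy, z, hz, hxy, hyz, hcxyz⟩ :=
    Finset.exists_consecutive_pairs_map_eq_of_two_pow_card_lt (A := A)
      (fun x y => c (normalize (x - y)))
      (fun x _ y _ h => hct _ (hdir x y h)) (by omega)
  have hangle : angle (x - y) (y - z) < ε := by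
    simpa only [angle_normalize_left, angle_normalize_right] using
      angle_lt_of_norm_sub_lt (norm_normalize_eq_one_iff.2 (sub_ne_zero.2 hxy))
        (norm_normalize_eq_one_iff.2 (sub_ne_zero.2 hyz)) hε.le hεπ
        (hclose _ (hdir x y hxy) _ (hdir y z hyz) hcxyz)
  refine ⟨x, hx, y, hy, z, hz, hxy, hyz, ?_, hangle⟩
  rintro rfl
  rw [← neg_sub x y, angle_self_neg_of_nonzero (sub_ne_zero.2 hxy)] at hangle
  exact hangle.not_ge hεπ

theorem erdos_furedi_angle_general (n : ℕ) (β : ℝ) (hβπ : β < Real.pi) :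
    ∃ q : ℕ, ∀ A : Finset (EuclideanSpace ℝ (Fin n)), q ≤ A.card →
      ∃ a ∈ A, ∃ b ∈ A, ∃ c ∈ A, a ≠ b ∧ b ≠ c ∧ a ≠ c ∧
        β ≤ EuclideanGeometry.angle a b c ∧ EuclideanGeometry.angle a b c ≤ Real.pi := by
  obtain ⟨q, hq⟩ :=
    exists_card_le_imp_exists_angle_sub_sub_lt (V := EuclideanSpace ℝ (Fin n)) (sub_pos.2 hβπ)
  refine ⟨q, fun A hA => ?_⟩
  obtain ⟨x, hx, y, hy, z, hz, hxy, hyz, hxz, hangle⟩ := hq A hA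
  have hxyz : EuclideanGeometry.angle x y z = π - angle (x - y) (y - z) := by
    rw [EuclideanGeometry.angle, vsub_eq_sub, vsub_eq_sub, ← neg_sub y z, angle_neg_right]
  exact ⟨x, hx, y, hy, z, hz, hxy, hyz, hxz, by linarith, EuclideanGeometry.angle_le_pi _ _ _⟩

/-- **Erdős–Füredi type lemma.** For every `n ≥ 1` and every angle `0 < β < π` there exists
`q = q(n, β) ∈ ℕ` such that every finite set `A ⊆ ℝⁿ` with at least `q` points contains three
distinct points `a, b, c` whose angle at `b` (the angle between `a - b` and `c - b`) lies
between `β` and `π`. -/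
theorem erdos_furedi_angle (n : ℕ) (hn : 1 ≤ n) (β : ℝ) (hβ0 : 0 < β) (hβπ : β < Real.pi) :
    ∃ q : ℕ, ∀ A : Finset (EuclideanSpace ℝ (Fin n)), q ≤ A.card →
      ∃ a ∈ A, ∃ b ∈ A, ∃ c ∈ A, a ≠ b ∧ b ≠ c ∧ a ≠ c ∧
        β ≤ EuclideanGeometry.angle a b c ∧ EuclideanGeometry.angle a b c ≤ Real.pi :=
  erdos_furedi_angle_general n β hβπ
end

section
/- Let y ∈ ℝⁿ, let θ be a unit vector, let 0 < η ≤ 1, let r > 0, and set t = √((η² + 4)/η²) and γ = 1/t. If z ∈ ℝⁿ lies outside both the closed ball B(y, tr) and the cone H(y, θ, γ), then the closed ball B(z, r) is disjoint from H(y, θ, η). -/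
/-!
Put `u = w - y` and `a = z - y`. As `a` lies outside the cone of half-aperture `arccos γ` and `u`
inside the one of half-aperture `arccos η`, the triangle inequality for angles gives
`∠(u, a) ≥ φ := arccos γ - arccos η ∈ [0, π/2]`, and the law of cosines then gives
`‖u - a‖ ≥ ‖a‖ sin φ`. The choice of `γ` makes `√(1 - γ²) = 2γ/η`, so
`sin φ = γ (2 - √(1 - η²)) ≥ γ`, whence `‖w - z‖ ≥ γ ‖a‖ > γ t r = r`.
-/

open Metric Real InnerProductGeometry
open scoped RealInnerProductSpace

section

variable {V : Type*} [NormedAddCommGroup V] [InnerProductSpace ℝ V]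

lemma norm_mul_sin_le_norm_sub {u a : V} {φ : ℝ} (hφ0 : 0 ≤ φ) (hφ : φ ≤ π / 2)
    (hφa : φ ≤ angle u a) : ‖a‖ * sin φ ≤ ‖u - a‖ := by
  -- the law of cosines reads `‖u - a‖² = (‖u‖ - ‖a‖ cos ψ)² + ‖a‖² sin² ψ` with `ψ = ∠(u, a)`
  have hlaw := norm_sub_sq_eq_norm_sq_add_norm_sq_sub_two_mul_norm_mul_norm_mul_cos_angle u a
  have hsin0 : 0 ≤ sin φ := sin_nonneg_of_nonneg_of_le_pi hφ0 (by linarith [pi_pos])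
  refine (pow_le_pow_iff_left₀ (by positivity) (norm_nonneg _) two_ne_zero).1 ?_
  rcases le_or_gt (angle u a) (π / 2) with hacute | hobtuse
  · have hsin : sin φ ≤ sin (angle u a) :=
      sin_le_sin_of_le_of_le_pi_div_two (by linarith [pi_pos]) hacute hφa
    nlinarith [sin_sq_add_cos_sq (angle u a), sq_nonneg (‖u‖ - ‖a‖ * cos (angle u a)),
      mul_le_mul_of_nonneg_left (mul_self_le_mul_self hsin0 hsin) (sq_nonneg ‖a‖)]
  · have hcos : cos (angle u a) ≤ 0 :=
      cos_nonpos_of_pi_div_two_le_of_le hobtuse.le (by linarith [angle_le_pi u a])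
    have hsin : sin φ * sin φ ≤ 1 := by nlinarith [sin_le_one φ]
    nlinarith [mul_nonpos_of_nonneg_of_nonpos (mul_nonneg (norm_nonneg u) (norm_nonneg a)) hcos,
      mul_le_mul_of_nonneg_left hsin (sq_nonneg ‖a‖), sq_nonneg ‖u‖]

lemma arccos_le_angle_of_inner_le {a θ : V} {γ : ℝ} (hθ : ‖θ‖ = 1) (hγ : 0 ≤ γ)
    (h : ⟪a, θ⟫ ≤ γ * ‖a‖) : arccos γ ≤ angle a θ := by
  rw [angle, hθ, mul_one]
  exact arccos_le_arccos (div_le_of_le_mul₀ (norm_nonneg a) hγ h)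

lemma angle_le_arccos_of_mul_norm_lt_inner {u θ : V} {η : ℝ} (hθ : ‖θ‖ = 1)
    (h : η * ‖u‖ < ⟪u, θ⟫) : angle u θ ≤ arccos η := by
  have hu : 0 < ‖u‖ := norm_pos_iff.2 (by rintro rfl; simp at h)
  rw [angle, hθ, mul_one]
  exact arccos_le_arccos ((le_div_iff₀ hu).2 h.le)

end

lemma le_sin_arccos_sub_arccos {η γ : ℝ} (hη0 : 0 < η) (hη1 : η ≤ 1) (hγ0 : 0 ≤ γ)
    (hγη : γ ^ 2 * (η ^ 2 + 4) = η ^ 2) : γ ≤ sin (arccos γ - arccos η) := by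
  have hγ1 : γ ≤ 1 := by nlinarith
  have hsqrt : √(1 - γ ^ 2) = 2 * γ / η := by
    rw [sqrt_eq_iff_mul_self_eq (by nlinarith) (by positivity)]
    field_simp
    linarith
  rw [sin_sub, sin_arccos, sin_arccos, cos_arccos (by linarith) hη1, cos_arccos (by linarith) hγ1,
    hsqrt, div_mul_cancel₀ _ hη0.ne']
  nlinarith [(sqrt_le_one (x := 1 - η ^ 2)).2 (by nlinarith)]

theorem ball_disjoint_cone_general (n : ℕ) (y θ z : EuclideanSpace ℝ (Fin n)) (hθ : ‖θ‖ = 1)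
    (η r : ℝ) (hη0 : 0 < η) (hη1 : η ≤ 1)
    (t γ : ℝ) (ht : t = Real.sqrt ((η ^ 2 + 4) / η ^ 2)) (hγ : γ = 1 / t)
    (hz1 : z ∉ closedBall y (t * r))
    (hz2 : z ∉ {w : EuclideanSpace ℝ (Fin n) | γ * ‖w - y‖ < ⟪w - y, θ⟫}) :
    ∀ w ∈ closedBall z r,
      w ∉ {w : EuclideanSpace ℝ (Fin n) | η * ‖w - y‖ < ⟪w - y, θ⟫} := by
  intro w hw hwH
  have ht0 : 0 < t := ht ▸ sqrt_pos.2 (by positivity)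
  have hγ0 : 0 < γ := hγ ▸ one_div_pos.2 ht0
  have hγη : γ ^ 2 * (η ^ 2 + 4) = η ^ 2 := by
    rw [hγ, ht, div_pow, sq_sqrt (by positivity)]
    field_simp
  have hγ_le : γ ≤ η := by nlinarith
  set φ := arccos γ - arccos η
  have hφ0 : 0 ≤ φ := sub_nonneg.2 (arccos_le_arccos hγ_le)
  have hφ : φ ≤ π / 2 := by linarith [arccos_le_pi_div_two.2 hγ0.le, arccos_nonneg η]
  have hφa : φ ≤ angle (w - y) (z - y) := by
    linarith [angle_le_angle_add_angle (z - y) (w - y) θ, angle_comm (z - y) (w - y),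
      arccos_le_angle_of_inner_le hθ hγ0.le (not_lt.1 hz2),
      angle_le_arccos_of_mul_norm_lt_inner hθ hwH]
  have hfar : t * r < ‖z - y‖ := by simpa [dist_eq_norm] using hz1
  have hnear : γ * ‖z - y‖ ≤ r := calc
    γ * ‖z - y‖ ≤ ‖z - y‖ * sin φ := by
      nlinarith [le_sin_arccos_sub_arccos hη0 hη1 hγ0.le hγη, norm_nonneg (z - y)]
    _ ≤ ‖(w - y) - (z - y)‖ := norm_mul_sin_le_norm_sub hφ0 hφ hφa
    _ = dist w z := by rw [sub_sub_sub_cancel_right, dist_eq_norm]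
    _ ≤ r := hw
  have hγtr : γ * (t * r) = r := by rw [← mul_assoc, hγ, one_div_mul_cancel ht0.ne', one_mul]
  linarith [mul_lt_mul_of_pos_left hfar hγ0]

/-- If `z` lies outside both the closed ball `B(y, t r)` and the cone
`H(y, θ, γ) = {w : (w - y)·θ > γ |w - y|}`, where `t = √((η² + 4)/η²)` and `γ = 1/t`,
then the closed ball `B(z, r)` is disjoint from the cone `H(y, θ, η)`. -/
theorem ball_disjoint_cone (n : ℕ) (y θ z : EuclideanSpace ℝ (Fin n)) (hθ : ‖θ‖ = 1)
    (η r : ℝ) (hη0 : 0 < η) (hη1 : η ≤ 1) (hr : 0 < r)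
    (t γ : ℝ) (ht : t = Real.sqrt ((η ^ 2 + 4) / η ^ 2)) (hγ : γ = 1 / t)
    (hz1 : z ∉ closedBall y (t * r))
    (hz2 : z ∉ {w : EuclideanSpace ℝ (Fin n) | γ * ‖w - y‖ < ⟪w - y, θ⟫}) :
    ∀ w ∈ closedBall z r,
      w ∉ {w : EuclideanSpace ℝ (Fin n) | η * ‖w - y‖ < ⟪w - y, θ⟫} :=
  ball_disjoint_cone_general n y θ z hθ η r hη0 hη1 t γ ht hγ hz1 hz2
end

section
/- Suppose 0 < η ≤ 1 and 0 < s ≤ n. Then there is a constant c = c(n, s, η) > 0 such that for every set A ⊆ ℝⁿ with H^s(A) < ∞, for H^s-almost every x ∈ A, limsup_{r→0⁺} inf_{θ ∈ S^{n−1}} H^s( A ∩ B(x,r) \ H(x,θ,η) ) / r^s ≥ c. -/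
/-!
Suppose the points of `A` where the cone-complement density is `< c` formed a set of positive
measure. Shrinking it, we get a set `W` of positive measure on which, uniformly for small `R`,
every point `y` has a direction `θ_y` with `μ(W ∩ B(y,R) \ H(y,θ_y,η)) < c R^s`, and on which
`μ(W ∩ B(z,ρ)) ≤ 2 (8ρ)^s` for small `ρ` (Vitali); by the lower density bound, some `x ∈ W` has
`μ(W ∩ B(x,r)) ≥ r^s/2` at arbitrarily small scales `r`.

Fix such an `r` and `d = κ r`. Call a point of `W ∩ B(x,r)` heavy if its ball of radius `ηd/4`
carries mass `≥ c (3r)^s`. The light points carry little mass, since `B(x,r)` is covered by a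
bounded number of `ηd/8`-balls. A heavy ball around `y'` cannot avoid the cone `H(y,θ_y,η)`, so
for heavy `y, y'` at distance `> d` we get `⟪y' - y, θ_y⟫ ≥ (η/2)|y' - y|` and the symmetric
inequality, whence `|θ_y - θ_{y'}| ≥ η`. Thus `d`-separated heavy points are at most as many as an
`η/2`-packing of the sphere, and by upper regularity the heavy points carry mass `≲ d^s`. Taking
`κ` small and then `c` small contradicts `μ(W ∩ B(x,r)) ≥ r^s/2`.
-/

open MeasureTheory Metric Filter Set
open scoped ENNReal NNReal Topology RealInnerProductSpace

section Covering

variable {X : Type*} [PseudoEMetricSpace X]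

theorem measure_le_mul_of_coveringNumber_le [MeasurableSpace X] (μ : Measure X) {S : Set X}
    {ε : ℝ≥0} {N : ℕ} {M : ℝ≥0∞} (hN : coveringNumber ε S ≤ N)
    (hM : ∀ z ∈ S, μ (S ∩ closedEBall z ε) ≤ M) : μ S ≤ N * M := by
  obtain ⟨C, hCS, hC, hcover, hcard⟩ :=
    exists_set_encard_eq_coveringNumber (hN.trans_lt (ENat.natCast_lt_top N)).ne
  have hcardN : hC.toFinset.card ≤ N := by
    rw [← hcard, hC.encard_eq_coe_toFinset_card, Nat.cast_le] at hN
    exact hN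
  calc μ S ≤ μ (⋃ c ∈ hC.toFinset, S ∩ closedEBall c ε) := by
        refine measure_mono fun z hz => ?_
        obtain ⟨c, hc, hzc⟩ := mem_iUnion₂.1 (isCover_iff_subset_iUnion_closedEBall.1 hcover hz)
        exact mem_iUnion₂.2 ⟨c, hC.mem_toFinset.2 hc, hz, hzc⟩
    _ ≤ ∑ c ∈ hC.toFinset, μ (S ∩ closedEBall c ε) := measure_biUnion_finset_le _ _
    _ ≤ hC.toFinset.card • M :=
        Finset.sum_le_card_nsmul _ _ _ fun c hc => hM c (hCS (hC.mem_toFinset.1 hc))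
    _ ≤ N * M := by
        rw [nsmul_eq_mul]
        gcongr

theorem packingNumber_le_of_forall_lt_edist {Y : Type*} [PseudoEMetricSpace Y] {f : X → Y}
    {A : Set X} {B : Set Y} {ε δ : ℝ≥0} (hf : MapsTo f A B)
    (h : ∀ x ∈ A, ∀ y ∈ A, ε < edist x y → δ < edist (f x) (f y)) :
    packingNumber ε A ≤ packingNumber δ B := by
  refine iSup_le fun C => iSup_le fun hCA => iSup_le fun hC => ?_
  have hinj : InjOn f C := fun x hx y hy hxy => by
    by_contra hne
    simpa [hxy] using h x (hCA hx) y (hCA hy) (hC hx hy hne)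
  rw [← hinj.encard_image]
  refine IsSeparated.encard_le_packingNumber (image_subset_iff.2 fun x hx => hf (hCA hx)) ?_
  rintro _ ⟨x, hx, rfl⟩ _ ⟨y, hy, rfl⟩ hne
  exact h x (hCA hx) y (hCA hy) (hC hx hy (ne_of_apply_ne f hne))

theorem TotallyBounded.packingNumber_ne_top {K : Set X} (hK : TotallyBounded K) {ε : ℝ≥0}
    (hε : ε ≠ 0) : packingNumber ε K ≠ ⊤ := by
  obtain ⟨C, -, hC, hcover⟩ :=
    exists_finite_isCover_of_totallyBounded (ε := ε / 2) (by simpa using hε) hK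
  have h := (packingNumber_two_mul_le_externalCoveringNumber (ε / 2) K).trans
    hcover.externalCoveringNumber_le_encard
  rw [mul_div_cancel₀ _ two_ne_zero] at h
  exact (h.trans_lt hC.encard_lt_top).ne

theorem exists_coveringNumber_closedBall_le (E : Type*) [NormedAddCommGroup E] [NormedSpace ℝ E]
    [ProperSpace E] {ε : ℝ≥0} (hε : ε ≠ 0) :
    ∃ N : ℕ, ∀ (x : E) (r : ℝ≥0), coveringNumber (r * ε) (closedBall x r) ≤ N := by
  obtain ⟨C, hC1, hC, hcover⟩ :=
    exists_finite_isCover_of_isCompact hε (isCompact_closedBall (0 : E) 1)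
  obtain ⟨N, hN⟩ := ENat.ne_top_iff_exists.1 hC.encard_lt_top.ne
  refine ⟨N, fun x r => ?_⟩
  set f : E → E := fun z => x + (r : ℝ) • z
  have hf : LipschitzWith r f :=
    LipschitzWith.of_dist_le_mul fun a b => by simp [f, dist_smul₀]
  have himage : f '' closedBall 0 1 = closedBall x r := by
    rw [show f = (x +ᵥ ·) ∘ ((r : ℝ) • ·) from rfl, image_comp, image_smul,
      _root_.smul_closedBall _ _ zero_le_one, image_vadd, vadd_closedBall]
    simp
  rw [← himage]
  calc coveringNumber (r * ε) (f '' closedBall 0 1) ≤ (f '' C).encard :=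
        (hcover.image_lipschitz hf).coveringNumber_le_encard (image_mono hC1)
    _ ≤ C.encard := encard_image_le f C
    _ = N := hN.symm

end Covering

theorem exists_measure_setOf_forall_Ioo_ne_zero {X : Type*} [MeasurableSpace X] {μ : Measure X}
    {S : Set X} {P : X → ℝ → Prop} (hS : μ S ≠ 0) (hP : ∀ x ∈ S, ∀ᶠ r in 𝓝[>] 0, P x r) :
    ∃ r₀ > 0, μ {x ∈ S | ∀ r ∈ Ioo 0 r₀, P x r} ≠ 0 := by
  by_contra! h
  refine hS (measure_mono_null (fun x hx => ?_) (measure_iUnion_null fun k : ℕ =>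
    h (1 / (k + 1)) (by positivity)))
  obtain ⟨u, hu, hsub⟩ := mem_nhdsGT_iff_exists_Ioo_subset.1 (hP x hx)
  obtain ⟨k, hk⟩ := exists_nat_one_div_lt (mem_Ioi.1 hu)
  exact mem_iUnion.2 ⟨k, hx, fun r hr => hsub ⟨hr.1, hr.2.trans hk⟩⟩

theorem ENNReal.eq_zero_of_two_mul_le_self {a : ℝ≥0∞} (ha : a ≠ ⊤) (h : 2 * a ≤ a) : a = 0 := by
  have h' : a + a ≤ a + 0 := by rwa [add_zero, ← two_mul]
  exact nonpos_iff_eq_zero.1 ((ENNReal.add_le_add_iff_left ha).1 h')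

section Density

variable {X : Type*} [MetricSpace X] [MeasurableSpace X] {s : ℝ}

theorem two_mul_measure_inter_le_iSup_ediam_rpow (μ : Measure X) {T U : Set X} {r₀ : ℝ}
    (h : ∀ x ∈ T, ∀ r ∈ Ioo 0 r₀, 2 * μ (T ∩ closedBall x r) ≤ ENNReal.ofReal r ^ s)
    (hU : ediam U < ENNReal.ofReal r₀) :
    2 * μ (T ∩ U) ≤ ⨆ _ : U.Nonempty, ediam U ^ s := by
  rcases (T ∩ U).eq_empty_or_nonempty with hTU | ⟨x, hxT, hxU⟩
  · simp [hTU]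
  have hUbdd : Bornology.IsBounded U := isBounded_iff_ediam_ne_top.2 (ne_top_of_lt hU)
  have hdiam : ediam U = ENNReal.ofReal (diam U) := (ENNReal.ofReal_toReal (ne_top_of_lt hU)).symm
  have hdiam_lt : diam U < r₀ := by
    rw [hdiam] at hU
    exact (ENNReal.ofReal_lt_ofReal_iff_of_nonneg diam_nonneg).1 hU
  have hbound : ∀ r ∈ Ioo (diam U) r₀, 2 * μ (T ∩ U) ≤ ENNReal.ofReal r ^ s := fun r hr => by
    have hUr : U ⊆ closedBall x r := fun y hy =>
      mem_closedBall.2 ((dist_le_diam_of_mem hUbdd hy hxU).trans hr.1.le)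
    exact (mul_le_mul_right (measure_mono (inter_subset_inter_right T hUr)) 2).trans
      (h x hxT r ⟨diam_nonneg.trans_lt hr.1, hr.2⟩)
  rw [iSup_pos ⟨x, hxU⟩, hdiam]
  exact ge_of_tendsto
    ((ENNReal.continuous_rpow_const.comp ENNReal.continuous_ofReal).continuousAt.tendsto.mono_left
      nhdsWithin_le_nhds) (eventually_of_mem (Ioo_mem_nhdsGT hdiam_lt) hbound)

variable [BorelSpace X]

theorem exists_iUnion_tsum_ediam_rpow_le {S : Set X} (hS : μH[s] S ≠ ⊤) {δ : ℝ≥0∞} (hδ : 0 < δ)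
    {ε : ℝ≥0∞} (hε : ε ≠ 0) :
    ∃ U : ℕ → Set X, S ⊆ ⋃ i, U i ∧ (∀ i, ediam (U i) ≤ δ) ∧
      ∑' i, ⨆ _ : (U i).Nonempty, ediam (U i) ^ s ≤ μH[s] S + ε := by
  have hδS : ⨅ (U : ℕ → Set X) (_ : S ⊆ ⋃ i, U i) (_ : ∀ i, ediam (U i) ≤ δ),
      ∑' i, ⨆ _ : (U i).Nonempty, ediam (U i) ^ s < μH[s] S + ε := by
    refine lt_of_le_of_lt ?_ (ENNReal.lt_add_right hS hε)
    rw [Measure.hausdorffMeasure_apply]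
    exact le_iSup₂ (f := fun δ (_ : 0 < δ) => ⨅ (U : ℕ → Set X) (_ : S ⊆ ⋃ i, U i)
      (_ : ∀ i, ediam (U i) ≤ δ), ∑' i, ⨆ _ : (U i).Nonempty, ediam (U i) ^ s) δ hδ
  simp only [iInf_lt_iff] at hδS
  obtain ⟨U, hSU, hUδ, hU⟩ := hδS
  exact ⟨U, hSU, hUδ, hU.le⟩

theorem hausdorffMeasure_eq_zero_of_forall_two_mul_le {T : Set X} (hT : μH[s] T ≠ ⊤) {r₀ : ℝ}
    (hr₀ : 0 < r₀)
    (h : ∀ x ∈ T, ∀ r ∈ Ioo 0 r₀, 2 * μH[s] (T ∩ closedBall x r) ≤ ENNReal.ofReal r ^ s) :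
    μH[s] T = 0 := by
  refine ENNReal.eq_zero_of_two_mul_le_self hT (ENNReal.le_of_forall_pos_le_add fun ε hε _ => ?_)
  obtain ⟨U, hTU, hUδ, hU⟩ := exists_iUnion_tsum_ediam_rpow_le hT
    (ENNReal.ofReal_pos.2 (half_pos hr₀)) (ENNReal.coe_ne_zero.2 hε.ne')
  have hUr₀ : ∀ i, ediam (U i) < ENNReal.ofReal r₀ := fun i =>
    (hUδ i).trans_lt ((ENNReal.ofReal_lt_ofReal_iff hr₀).2 (half_lt_self hr₀))
  calc 2 * μH[s] T ≤ 2 * ∑' i, μH[s] (T ∩ U i) := by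
        gcongr
        refine (measure_mono ?_).trans (measure_iUnion_le _)
        rw [← inter_iUnion]
        exact subset_inter subset_rfl hTU
    _ = ∑' i, 2 * μH[s] (T ∩ U i) := ENNReal.tsum_mul_left.symm
    _ ≤ ∑' i, ⨆ _ : (U i).Nonempty, ediam (U i) ^ s :=
        ENNReal.tsum_le_tsum fun i => two_mul_measure_inter_le_iSup_ediam_rpow _ h (hUr₀ i)
    _ ≤ μH[s] T + ε := hU

theorem hausdorffMeasure_setOf_eventually_two_mul_lt_eq_zero {W : Set X} (hW : μH[s] W ≠ ⊤) :
    μH[s] {x ∈ W | ∀ᶠ r in 𝓝[>] 0, 2 * μH[s] (W ∩ closedBall x r) < ENNReal.ofReal r ^ s} = 0 := by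
  by_contra h
  obtain ⟨r₀, hr₀, hT⟩ := exists_measure_setOf_forall_Ioo_ne_zero h fun x hx => hx.2
  refine hT (hausdorffMeasure_eq_zero_of_forall_two_mul_le
    (ne_top_of_le_ne_top hW (measure_mono fun x hx => hx.1.1)) hr₀ fun x hx r hr => ?_)
  exact (mul_le_mul_right (measure_mono (inter_subset_inter_left _ fun y hy => hy.1.1)) 2).trans
    (hx.2 r hr).le

theorem exists_mem_frequently_ofReal_rpow_le_two_mul {W : Set X} (hW0 : μH[s] W ≠ 0)
    (hW : μH[s] W ≠ ⊤) :
    ∃ x ∈ W, ∃ᶠ r in 𝓝[>] 0, ENNReal.ofReal r ^ s ≤ 2 * μH[s] (W ∩ closedBall x r) := by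
  by_contra! h
  refine hW0 (measure_mono_null (fun x hx => ?_)
    (hausdorffMeasure_setOf_eventually_two_mul_lt_eq_zero hW))
  exact ⟨hx, by simpa only [not_frequently, not_le] using h x hx⟩

theorem exists_countable_closedBall_cover_tsum_le [SecondCountableTopology X] (μ : Measure X)
    {G E : Set X} {φ : ℝ → ℝ≥0∞} {δ : ℝ} (hδ : 0 < δ)
    (hG : ∀ z ∈ G, ∃ᶠ ρ in 𝓝[>] 0, φ ρ < μ (E ∩ closedBall z ρ)) :
    ∃ u : Set X, u.Countable ∧ ∃ ρ : X → ℝ, G ⊆ ⋃ b ∈ u, closedBall b (4 * ρ b) ∧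
      (∀ b ∈ u, 0 < ρ b ∧ ρ b ≤ δ) ∧ ∑' b : u, φ (ρ b) ≤ μ E := by
  have hρ : ∀ z ∈ G, ∃ ρ ∈ Ioo 0 δ, φ ρ < μ (E ∩ closedBall z ρ) := fun z hz =>
    ((hG z hz).and_eventually (Ioo_mem_nhdsGT hδ)).exists.imp fun ρ h => ⟨h.2, h.1⟩
  choose! ρ hρδ hρφ using hρ
  obtain ⟨u, huG, hdisj, hcover⟩ := Vitali.exists_disjoint_subfamily_covering_enlargement_closedBall
    G id ρ δ (fun z hz => (hρδ z hz).2.le) 4 (by norm_num)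
  have hu : u.Countable := hdisj.countable_of_nonempty_interior fun z hz =>
    (nonempty_ball.2 (hρδ z (huG hz)).1).mono ball_subset_interior_closedBall
  refine ⟨u, hu, ρ, fun z hz => ?_, fun b hb => ⟨(hρδ b (huG hb)).1, (hρδ b (huG hb)).2.le⟩, ?_⟩
  · obtain ⟨b, hbu, hb⟩ := hcover z hz
    exact mem_biUnion hbu (hb (mem_closedBall_self (hρδ z hz).1.le))
  have := hu.to_subtype
  calc ∑' b : u, φ (ρ b) ≤ ∑' b : u, μ.restrict E (closedBall b (ρ b)) :=
        ENNReal.tsum_le_tsum fun b => by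
          rw [Measure.restrict_apply measurableSet_closedBall, inter_comm]
          exact (hρφ b (huG b.2)).le
    _ = μ.restrict E (⋃ b : u, closedBall b (ρ b)) :=
        (measure_iUnion (fun (b b' : u) hbb' => hdisj b.2 b'.2 (Subtype.coe_injective.ne hbb'))
          fun _ => measurableSet_closedBall).symm
    _ ≤ μ.restrict E univ := measure_mono (subset_univ _)
    _ = μ E := Measure.restrict_apply_univ E

theorem mul_hausdorffMeasure_setOf_frequently_lt_le [SecondCountableTopology X] (hs : 0 ≤ s)
    (c : ℝ≥0∞) (E : Set X) :
    c * μH[s] {z ∈ E | ∃ᶠ ρ in 𝓝[>] 0,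
      c * ENNReal.ofReal (8 * ρ) ^ s < μH[s] (E ∩ closedBall z ρ)} ≤ μH[s] E := by
  set G := {z ∈ E | ∃ᶠ ρ in 𝓝[>] 0, c * ENNReal.ofReal (8 * ρ) ^ s < μH[s] (E ∩ closedBall z ρ)}
  have hcover (n : ℕ) := exists_countable_closedBall_cover_tsum_le μH[s] (G := G) (E := E)
    (φ := fun ρ => c * ENNReal.ofReal (8 * ρ) ^ s) (δ := 1 / (n + 1)) (by positivity)
    fun z hz => hz.2
  choose u hu ρ hGu hρ hsum using hcover
  have := fun n => (hu n).to_subtype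
  have hdiam : ∀ n, ∀ b : u n,
      ediam (closedBall (b : X) (4 * ρ n b)) ≤ ENNReal.ofReal (8 * ρ n b) :=
    fun n b => ediam_le_of_forall_dist_le fun y hy z hz => by
      linarith [dist_triangle_right y z b, mem_closedBall.1 hy, mem_closedBall.1 hz]
  have hle := Measure.hausdorffMeasure_le_liminf_tsum (ι := fun n => u n) s G (l := atTop)
    (fun n : ℕ => ENNReal.ofReal (8 * (1 / (n + 1)))) ?_ (fun n b => closedBall (b : X) (4 * ρ n b))
    (Eventually.of_forall fun n b => (hdiam n b).trans (ENNReal.ofReal_le_ofReal (by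
      linarith [(hρ n b b.2).2])))
    (Eventually.of_forall fun n => by simpa [iUnion_subtype] using hGu n)
  · calc c * μH[s] G
        ≤ c * ⨆ n, ∑' b : u n, ENNReal.ofReal (8 * ρ n b) ^ s := by
          refine mul_le_mul_right (hle.trans (liminf_le_of_frequently_le'
            (Frequently.of_forall fun n => le_iSup_of_le n ?_))) c
          exact ENNReal.tsum_le_tsum fun b => ENNReal.rpow_le_rpow (hdiam n b) hs
      _ = ⨆ n, ∑' b : u n, c * ENNReal.ofReal (8 * ρ n b) ^ s := by
          simp_rw [ENNReal.mul_iSup, ENNReal.tsum_mul_left]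
      _ ≤ μH[s] E := iSup_le hsum
  · simpa using ENNReal.tendsto_ofReal (tendsto_one_div_add_atTop_nhds_zero_nat.const_mul 8)

theorem exists_subset_hausdorffMeasure_ne_zero_forall_closedBall_le [SecondCountableTopology X]
    (hs : 0 ≤ s) {E : Set X} (hE0 : μH[s] E ≠ 0) (hE : μH[s] E ≠ ⊤) :
    ∃ W ⊆ E, μH[s] W ≠ 0 ∧ ∃ r₀ > 0, ∀ z ∈ W, ∀ ρ ∈ Ioo 0 r₀,
      μH[s] (W ∩ closedBall z ρ) ≤ 2 * ENNReal.ofReal (8 * ρ) ^ s := by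
  set G := {z ∈ E | ∃ᶠ ρ in 𝓝[>] 0, 2 * ENNReal.ofReal (8 * ρ) ^ s < μH[s] (E ∩ closedBall z ρ)}
  have hEG : μH[s] (E \ G) ≠ 0 := fun h0 => by
    refine hE0 (ENNReal.eq_zero_of_two_mul_le_self hE ?_)
    calc 2 * μH[s] E ≤ 2 * (μH[s] G + μH[s] (E \ G)) := by
          gcongr
          exact (measure_mono fun z hz => by by_cases hzG : z ∈ G <;> simp [hzG, hz]).trans
            (measure_union_le _ _)
      _ ≤ μH[s] E := by
          rw [h0, add_zero]
          exact mul_hausdorffMeasure_setOf_frequently_lt_le hs 2 E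
  obtain ⟨r₀, hr₀, hW⟩ := exists_measure_setOf_forall_Ioo_ne_zero hEG fun z hz =>
    (not_frequently.1 fun h => hz.2 ⟨hz.1, h⟩).mono fun ρ => le_of_not_gt
  exact ⟨_, fun z hz => hz.1.1, hW, r₀, hr₀, fun z hz ρ hρ =>
    (measure_mono (inter_subset_inter_left _ fun w hw => hw.1.1)).trans (hz.2 ρ hρ)⟩

end Density

section Cone

variable {E : Type*} [NormedAddCommGroup E] [InnerProductSpace ℝ E]

def openCone (x θ : E) (η : ℝ) : Set E := {y | η * ‖y - x‖ < ⟪y - x, θ⟫}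

theorem isOpen_openCone (x θ : E) (η : ℝ) : IsOpen (openCone x θ η) :=
  isOpen_lt (by fun_prop) (by fun_prop)

theorem half_mul_norm_le_inner_of_mem_openCone {x y w θ : E} {η : ℝ} (hθ : ‖θ‖ = 1)
    (hη0 : 0 ≤ η) (hη1 : η ≤ 1) (hw : w ∈ openCone x θ η) (hwy : ‖w - y‖ ≤ η / 4 * ‖y - x‖) :
    η / 2 * ‖y - x‖ ≤ ⟪y - x, θ⟫ := by
  have hw' : η * ‖w - x‖ < ⟪w - x, θ⟫ := hw
  have hθwy : ⟪w - y, θ⟫ ≤ ‖w - y‖ := by simpa [hθ] using real_inner_le_norm (w - y) θ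
  have htri : ‖y - x‖ ≤ ‖w - y‖ + ‖w - x‖ := by
    simpa [norm_sub_rev y w] using norm_sub_le_norm_sub_add_norm_sub y w x
  have hsplit : ⟪y - x, θ⟫ = ⟪w - x, θ⟫ - ⟪w - y, θ⟫ := by
    rw [← inner_sub_left, sub_sub_sub_cancel_left]
  nlinarith [mul_le_mul_of_nonneg_left htri hη0,
    mul_le_mul_of_nonneg_right hη1 (norm_nonneg (w - y))]

theorem two_mul_le_norm_sub_of_le_inner {u θ θ' : E} {a : ℝ} (hu : u ≠ 0)
    (h : a * ‖u‖ ≤ ⟪u, θ⟫) (h' : a * ‖u‖ ≤ ⟪-u, θ'⟫) : 2 * a ≤ ‖θ - θ'‖ := by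
  rw [inner_neg_left] at h'
  have : 2 * a * ‖u‖ ≤ ‖θ - θ'‖ * ‖u‖ := by
    calc 2 * a * ‖u‖ ≤ ⟪u, θ - θ'⟫ := by rw [inner_sub_right]; linarith
      _ ≤ ‖u‖ * ‖θ - θ'‖ := real_inner_le_norm _ _
      _ = ‖θ - θ'‖ * ‖u‖ := mul_comm _ _
  exact le_of_mul_le_mul_right this (norm_pos_iff.2 hu)

variable [MeasurableSpace E]

noncomputable def upperConeComplementDensity (μ : Measure E) (s η : ℝ) (A : Set E) (x : E) : ℝ≥0∞ :=
  limsup (fun r : ℝ => ⨅ θ : sphere (0 : E) 1,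
    μ ((A ∩ closedBall x r) \ openCone x θ η) / ENNReal.ofReal (r ^ s)) (𝓝[>] 0)

theorem upperConeComplementDensity_toMeasurable [OpensMeasurableSpace E] {μ : Measure E}
    {s η : ℝ} {A : Set E} (hA : μ A ≠ ⊤) :
    upperConeComplementDensity μ s η (toMeasurable μ A) = upperConeComplementDensity μ s η A := by
  ext x
  simp only [upperConeComplementDensity, inter_sdiff_assoc]
  congr! 4 with r θ
  rw [Measure.measure_toMeasurable_inter
    (measurableSet_closedBall.diff (isOpen_openCone _ _ _).measurableSet) hA]

theorem eventually_exists_measure_diff_openCone_lt {μ : Measure E} {s η γ : ℝ} (hs : 0 ≤ s)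
    (hγ : 0 ≤ γ) {A : Set E} {x : E}
    (h : upperConeComplementDensity μ s η A x < ENNReal.ofReal γ ^ s) :
    ∀ᶠ r in 𝓝[>] 0, ∃ θ ∈ sphere (0 : E) 1,
      μ ((A ∩ closedBall x r) \ openCone x θ η) < ENNReal.ofReal (γ * r) ^ s := by
  filter_upwards [eventually_lt_of_limsup_lt h, self_mem_nhdsWithin] with r hr hr0
  obtain ⟨θ, hθ⟩ := iInf_lt_iff.1 hr
  refine ⟨θ, θ.2, ?_⟩
  rwa [ENNReal.div_lt_iff (Or.inl (ENNReal.ofReal_pos.2 (Real.rpow_pos_of_pos hr0 s)).ne')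
    (Or.inl ENNReal.ofReal_ne_top), ← ENNReal.ofReal_rpow_of_nonneg (le_of_lt hr0) hs,
    ← ENNReal.mul_rpow_of_nonneg _ _ hs, ← ENNReal.ofReal_mul hγ] at hθ

theorem half_mul_norm_le_inner_of_measure_diff_openCone_lt (μ : Measure E) {W : Set E}
    {x y θ : E} {η R ρ : ℝ} {m : ℝ≥0∞} (hθ : ‖θ‖ = 1) (hη0 : 0 ≤ η) (hη1 : η ≤ 1)
    (hρ : ρ ≤ η / 4 * ‖y - x‖) (hball : closedBall y ρ ⊆ closedBall x R)
    (hcone : μ ((W ∩ closedBall x R) \ openCone x θ η) < m) (hy : m ≤ μ (W ∩ closedBall y ρ)) :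
    η / 2 * ‖y - x‖ ≤ ⟪y - x, θ⟫ := by
  obtain ⟨w, ⟨-, hwy⟩, hw⟩ : (W ∩ closedBall y ρ ∩ openCone x θ η).Nonempty := by
    by_contra! h
    refine (hy.trans (measure_mono fun w hw => ?_)).not_gt hcone
    exact ⟨⟨hw.1, hball hw.2⟩, fun hwc => h.subset ⟨hw, hwc⟩⟩
  exact half_mul_norm_le_inner_of_mem_openCone hθ hη0 hη1 hw
    ((mem_closedBall_iff_norm.1 hwy).trans hρ)

end Cone

theorem exists_mem_Ioo_mul_ofReal_mul_rpow_lt {s : ℝ} (hs : 0 < s) (a : ℝ) {C ε : ℝ≥0∞}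
    (hC : C ≠ ⊤) (hε : 0 < ε) : ∃ κ ∈ Ioo (0 : ℝ) 1, C * ENNReal.ofReal (a * κ) ^ s < ε := by
  have hlim : Tendsto (fun κ : ℝ => C * ENNReal.ofReal (a * κ) ^ s) (𝓝 0)
      (𝓝 (C * ENNReal.ofReal (a * 0) ^ s)) :=
    ENNReal.Tendsto.const_mul ((ENNReal.continuous_rpow_const.comp
      (ENNReal.continuous_ofReal.comp (continuous_const.mul continuous_id))).tendsto 0) (Or.inr hC)
  rw [mul_zero, ENNReal.ofReal_zero, ENNReal.zero_rpow_of_pos hs, mul_zero] at hlim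
  obtain ⟨κ, hκ, hκI⟩ := (((hlim.eventually (gt_mem_nhds hε)).filter_mono
    nhdsWithin_le_nhds).and (Ioo_mem_nhdsGT one_pos)).exists
  exact ⟨κ, hκI, hκ⟩

theorem two_mul_add_lt_ofReal_rpow {s a b r : ℝ} (hs : 0 ≤ s) (ha : 0 ≤ a) (hb : 0 ≤ b)
    (hr : 0 < r) {NQ NS : ℕ} (haQ : 2 * NQ * ENNReal.ofReal a ^ s < 1 / 2)
    (hbS : 4 * NS * ENNReal.ofReal b ^ s < 1 / 2) :
    2 * (NQ * ENNReal.ofReal (a * r) ^ s + NS * (2 * ENNReal.ofReal (b * r) ^ s)) <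
      ENNReal.ofReal r ^ s := by
  have hR0 : ENNReal.ofReal r ^ s ≠ 0 :=
    (ENNReal.rpow_pos (ENNReal.ofReal_pos.2 hr) ENNReal.ofReal_ne_top).ne'
  have hRtop : ENNReal.ofReal r ^ s ≠ ⊤ := ENNReal.rpow_ne_top_of_nonneg hs ENNReal.ofReal_ne_top
  rw [ENNReal.ofReal_mul ha, ENNReal.ofReal_mul hb, ENNReal.mul_rpow_of_nonneg _ _ hs,
    ENNReal.mul_rpow_of_nonneg _ _ hs]
  calc _ = ENNReal.ofReal r ^ s *
        (2 * NQ * ENNReal.ofReal a ^ s + 4 * NS * ENNReal.ofReal b ^ s) := by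
        ring
    _ < ENNReal.ofReal r ^ s * (1 / 2 + 1 / 2) :=
        ENNReal.mul_lt_mul_right hR0 hRtop (ENNReal.add_lt_add haQ hbS)
    _ = ENNReal.ofReal r ^ s := by rw [ENNReal.add_halves, mul_one]

section Core

variable {E : Type*} [NormedAddCommGroup E] [InnerProductSpace ℝ E] [MeasurableSpace E]

theorem measure_inter_closedBall_le_of_forall_exists_openCone (μ : Measure E) {W : Set E} {x : E}
    {η r : ℝ} {d ρ σ : ℝ≥0} {m M : ℝ≥0∞} {NQ NS : ℕ} (hη1 : η ≤ 1) (hσ : (σ : ℝ) < η)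
    (hρd : (ρ : ℝ) ≤ η / 4 * d) (hρr : (ρ : ℝ) ≤ r)
    (hNQ : coveringNumber (ρ / 2) (closedBall x r) ≤ NQ)
    (hNS : packingNumber σ (sphere (0 : E) 1) ≤ NS)
    (hM : ∀ z ∈ W, μ (W ∩ closedBall z d) ≤ M)
    (hcone : ∀ y ∈ W, ∃ θ ∈ sphere (0 : E) 1,
      μ ((W ∩ closedBall y (3 * r)) \ openCone y θ η) < m) :
    μ (W ∩ closedBall x r) ≤ NQ * m + NS * M := by
  have hη0 : 0 < η := σ.coe_nonneg.trans_lt hσ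
  set L := {z ∈ W ∩ closedBall x r | μ (W ∩ closedBall z ρ) < m}
  set H := {z ∈ W ∩ closedBall x r | m ≤ μ (W ∩ closedBall z ρ)}
  have hL : μ L ≤ NQ * m := by
    refine measure_le_mul_of_coveringNumber_le μ
      ((coveringNumber_subset_le fun z hz => hz.1.2).trans hNQ) fun z hz => ?_
    rw [closedEBall_coe]
    exact (measure_mono (inter_subset_inter_left _ fun w hw => hw.1.1)).trans hz.2.le
  choose! θ hθ hθcone using hcone
  have hsee : ∀ y ∈ H, ∀ y' ∈ H, (d : ℝ) < ‖y' - y‖ → η / 2 * ‖y' - y‖ ≤ ⟪y' - y, θ y⟫ := by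
    intro y hy y' hy' hyy'
    refine half_mul_norm_le_inner_of_measure_diff_openCone_lt μ
      (mem_sphere_zero_iff_norm.1 (hθ y hy.1.1)) hη0.le hη1
      (hρd.trans (mul_le_mul_of_nonneg_left hyy'.le (by positivity)))
      (closedBall_subset_closedBall' ?_) (hθcone y hy.1.1) hy'.2
    linarith [dist_triangle_right y' y x, mem_closedBall.1 hy.1.2, mem_closedBall.1 hy'.1.2]
  have hsep : packingNumber d H ≤ packingNumber σ (sphere (0 : E) 1) := by
    refine packingNumber_le_of_forall_lt_edist (fun y hy => hθ y hy.1.1) fun y hy y' hy' hyy' => ?_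
    rw [edist_nndist, ENNReal.coe_lt_coe, ← NNReal.coe_lt_coe, coe_nndist, dist_comm,
      dist_eq_norm] at hyy'
    have hθθ := two_mul_le_norm_sub_of_le_inner
      (norm_pos_iff.1 ((NNReal.coe_nonneg d).trans_lt hyy')) (hsee y hy y' hy' hyy')
      (by rw [neg_sub, norm_sub_rev]; exact hsee y' hy' y hy (by rwa [norm_sub_rev]))
    rw [edist_nndist, ENNReal.coe_lt_coe, ← NNReal.coe_lt_coe, coe_nndist, dist_eq_norm]
    linarith
  have hH : μ H ≤ NS * M := by
    refine measure_le_mul_of_coveringNumber_le μ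
      ((coveringNumber_le_packingNumber _ _).trans (hsep.trans hNS)) fun z hz => ?_
    rw [closedEBall_coe]
    exact (measure_mono (inter_subset_inter_left _ fun w hw => hw.1.1)).trans (hM z hz.1.1)
  calc μ (W ∩ closedBall x r) ≤ μ (L ∪ H) :=
        measure_mono fun z hz => (lt_or_ge _ _).imp (fun h => ⟨hz, h⟩) fun h => ⟨hz, h⟩
    _ ≤ μ L + μ H := measure_union_le _ _
    _ ≤ NQ * m + NS * M := add_le_add hL hH

end Core

theorem two_mul_measure_inter_closedBall_lt {E : Type*} [NormedAddCommGroup E]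
    [InnerProductSpace ℝ E] [MeasurableSpace E] (μ : Measure E) {W : Set E} (x : E)
    {s η κ γ r r₁ r₂ : ℝ} {NS NQ : ℕ} (hs : 0 ≤ s) (hη0 : 0 < η) (hη1 : η ≤ 1) (hκ0 : 0 < κ)
    (hκ1 : κ < 1) (hγ0 : 0 < γ) (hNS : packingNumber (η / 2).toNNReal (sphere (0 : E) 1) ≤ NS)
    (hNQ : ∀ (x : E) (r : ℝ≥0), coveringNumber (r * (η * κ / 8).toNNReal) (closedBall x r) ≤ NQ)
    (hκ : 4 * NS * ENNReal.ofReal (8 * κ) ^ s < 1 / 2)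
    (hγ : 2 * NQ * ENNReal.ofReal (3 * γ) ^ s < 1 / 2)
    (hreg : ∀ z ∈ W, ∀ ρ ∈ Ioo 0 r₂, μ (W ∩ closedBall z ρ) ≤ 2 * ENNReal.ofReal (8 * ρ) ^ s)
    (hcone : ∀ y ∈ W, ∀ R ∈ Ioo 0 r₁, ∃ θ ∈ sphere (0 : E) 1,
      μ ((W ∩ closedBall y R) \ openCone y θ η) < ENNReal.ofReal (γ * R) ^ s)
    (hr0 : 0 < r) (hr₁ : 3 * r < r₁) (hr₂ : r < r₂) :
    2 * μ (W ∩ closedBall x r) < ENNReal.ofReal r ^ s := by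
  have hd : ((κ * r).toNNReal : ℝ) = κ * r := Real.coe_toNNReal _ (by positivity)
  have hρ : ((η * κ * r / 4).toNNReal : ℝ) = η * κ * r / 4 := Real.coe_toNNReal _ (by positivity)
  have hNQr : coveringNumber ((η * κ * r / 4).toNNReal / 2) (closedBall x r) ≤ NQ := by
    convert hNQ x r.toNNReal using 2
    · ext
      simp only [NNReal.coe_div, hρ, NNReal.coe_mul, NNReal.coe_ofNat,
        Real.coe_toNNReal _ hr0.le, Real.coe_toNNReal _ (by positivity : 0 ≤ η * κ / 8)]
      ring
    · rw [Real.coe_toNNReal _ hr0.le]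
  have hbound := measure_inter_closedBall_le_of_forall_exists_openCone μ (x := x)
    (d := (κ * r).toNNReal) (m := ENNReal.ofReal (3 * γ * r) ^ s)
    (M := 2 * ENNReal.ofReal (8 * κ * r) ^ s) hη1 (by simp [hη0])
    (by rw [hρ, hd]; nlinarith) (by rw [hρ]; nlinarith) hNQr hNS
    (fun z hz => by
      rw [hd, mul_assoc 8 κ r]
      exact hreg z hz (κ * r) ⟨by positivity, by nlinarith⟩)
    (fun y hy => by
      rw [show 3 * γ * r = γ * (3 * r) by ring]
      exact hcone y hy (3 * r) ⟨by positivity, hr₁⟩)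
  exact (mul_le_mul_right hbound 2).trans_lt
    (two_mul_add_lt_ofReal_rpow hs (by positivity) (by positivity) hr0 hγ hκ)

section Null

variable {E : Type*} [NormedAddCommGroup E] [InnerProductSpace ℝ E] [FiniteDimensional ℝ E]
  [MeasurableSpace E] [BorelSpace E]

theorem exists_pos_forall_hausdorffMeasure_eq_zero_of_eventually_exists_openCone {s η : ℝ}
    (hs : 0 < s) (hη0 : 0 < η) (hη1 : η ≤ 1) :
    ∃ γ > 0, ∀ W : Set E, μH[s] W ≠ ⊤ →
      (∀ y ∈ W, ∀ᶠ R in 𝓝[>] 0, ∃ θ ∈ sphere (0 : E) 1,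
        μH[s] ((W ∩ closedBall y R) \ openCone y θ η) < ENNReal.ofReal (γ * R) ^ s) →
      μH[s] W = 0 := by
  obtain ⟨NS, hNS⟩ := ENat.ne_top_iff_exists.1 ((isCompact_sphere (0 : E) 1).totallyBounded
    |>.packingNumber_ne_top (ε := (η / 2).toNNReal) (by simpa using hη0))
  obtain ⟨κ, ⟨hκ0, hκ1⟩, hκ⟩ := exists_mem_Ioo_mul_ofReal_mul_rpow_lt hs 8
    (C := 4 * NS) (ε := 1 / 2) (by finiteness) (by norm_num)
  obtain ⟨NQ, hNQ⟩ := exists_coveringNumber_closedBall_le E (ε := (η * κ / 8).toNNReal)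
    (by simpa using by positivity)
  obtain ⟨γ, ⟨hγ0, -⟩, hγ⟩ := exists_mem_Ioo_mul_ofReal_mul_rpow_lt hs 3
    (C := 2 * NQ) (ε := 1 / 2) (by finiteness) (by norm_num)
  refine ⟨γ, hγ0, fun W hW hcone => ?_⟩
  by_contra hW0
  obtain ⟨r₁, hr₁, hW₁⟩ := exists_measure_setOf_forall_Ioo_ne_zero hW0 hcone
  obtain ⟨W₂, hW₂₁, hW₂0, r₂, hr₂, hreg⟩ :=
    exists_subset_hausdorffMeasure_ne_zero_forall_closedBall_le hs.le hW₁
      (ne_top_of_le_ne_top hW (measure_mono fun y hy => hy.1))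
  have hcone₂ : ∀ y ∈ W₂, ∀ R ∈ Ioo 0 r₁, ∃ θ ∈ sphere (0 : E) 1,
      μH[s] ((W₂ ∩ closedBall y R) \ openCone y θ η) < ENNReal.ofReal (γ * R) ^ s :=
    fun y hy R hR => by
      obtain ⟨θ, hθ, hlt⟩ := (hW₂₁ hy).2 R hR
      exact ⟨θ, hθ, (measure_mono (sdiff_subset_sdiff_left
        (inter_subset_inter_left _ fun w hw => (hW₂₁ hw).1))).trans_lt hlt⟩
  obtain ⟨x, -, hx⟩ := exists_mem_frequently_ofReal_rpow_le_two_mul hW₂0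
    (ne_top_of_le_ne_top hW (measure_mono fun y hy => (hW₂₁ hy).1))
  obtain ⟨r, hrx, hr0, hr⟩ :=
    (hx.and_eventually (Ioo_mem_nhdsGT (lt_min (div_pos hr₁ three_pos) hr₂))).exists
  exact hrx.not_gt (two_mul_measure_inter_closedBall_lt μH[s] x hs.le hη0 hη1 hκ0 hκ1 hγ0
    hNS.ge hNQ hκ hγ hreg hcone₂ hr0 (by linarith [min_le_left (r₁ / 3) r₂])
    (hr.trans_le (min_le_right _ _)))

end Null

theorem nonsymmetric_upper_density_general (n : ℕ) (s η : ℝ) (hs0 : 0 < s)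
    (hη0 : 0 < η) (hη1 : η ≤ 1) :
    ∃ c : ℝ≥0∞, 0 < c ∧
      ∀ A : Set (EuclideanSpace ℝ (Fin n)), μH[s] A < ⊤ →
        ∀ᵐ x ∂(μH[s] : Measure (EuclideanSpace ℝ (Fin n))).restrict A,
          c ≤ Filter.limsup (fun r : ℝ =>
              ⨅ θ : sphere (0 : EuclideanSpace ℝ (Fin n)) 1,
                μH[s] ((A ∩ closedBall x r) \
                  {y : EuclideanSpace ℝ (Fin n) |
                    η * ‖y - x‖ < ⟪y - x, (θ : EuclideanSpace ℝ (Fin n))⟫}) /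
                ENNReal.ofReal (r ^ s))
            (𝓝[>] (0 : ℝ)) := by
  obtain ⟨γ, hγ, hnull⟩ := exists_pos_forall_hausdorffMeasure_eq_zero_of_eventually_exists_openCone
    (E := EuclideanSpace ℝ (Fin n)) hs0 hη0 hη1
  refine ⟨ENNReal.ofReal γ ^ s, ENNReal.rpow_pos (ENNReal.ofReal_pos.2 hγ) ENNReal.ofReal_ne_top,
    fun A hA => ?_⟩
  set A' := toMeasurable μH[s] A
  have hA' : μH[s] A' ≠ ⊤ := by rw [measure_toMeasurable]; exact hA.ne
  set B := {x ∈ A' | upperConeComplementDensity μH[s] s η A' x < ENNReal.ofReal γ ^ s}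
  have hB : μH[s] B = 0 := hnull B (ne_top_of_le_ne_top hA' (measure_mono fun x hx => hx.1))
    fun y hy => (eventually_exists_measure_diff_openCone_lt hs0.le hγ.le hy.2).mono
      fun R ⟨θ, hθ, hlt⟩ => ⟨θ, hθ, (measure_mono (sdiff_subset_sdiff_left
        (inter_subset_inter_left _ fun w hw => hw.1))).trans_lt hlt⟩
  rw [← Measure.restrict_toMeasurable hA.ne, ae_restrict_iff' (measurableSet_toMeasurable _ _)]
  filter_upwards [measure_eq_zero_iff_ae_notMem.1 hB] with x hxB hxA'
  change _ ≤ upperConeComplementDensity μH[s] s η A x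
  rw [← upperConeComplementDensity_toMeasurable hA.ne]
  exact not_lt.1 fun h => hxB ⟨hxA', h⟩

/-- **Nonsymmetric upper density theorem.** For `0 < η ≤ 1` and `0 < s ≤ n` there is a
constant `c = c(n, s, η) > 0` such that for every `A ⊆ ℝⁿ` with `H^s(A) < ∞`, for
`H^s`-almost every `x ∈ A`,
`limsup_{r→0⁺} inf_{θ ∈ S^{n-1}} H^s(A ∩ B(x,r) \ H(x,θ,η)) / r^s ≥ c`. -/
theorem nonsymmetric_upper_density (n : ℕ) (s η : ℝ) (hs0 : 0 < s) (hsn : s ≤ n)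
    (hη0 : 0 < η) (hη1 : η ≤ 1) :
    ∃ c : ℝ≥0∞, 0 < c ∧
      ∀ A : Set (EuclideanSpace ℝ (Fin n)), μH[s] A < ⊤ →
        ∀ᵐ x ∂(μH[s] : Measure (EuclideanSpace ℝ (Fin n))).restrict A,
          c ≤ Filter.limsup (fun r : ℝ =>
              ⨅ θ : sphere (0 : EuclideanSpace ℝ (Fin n)) 1,
                μH[s] ((A ∩ closedBall x r) \
                  {y : EuclideanSpace ℝ (Fin n) |
                    η * ‖y - x‖ < ⟪y - x, (θ : EuclideanSpace ℝ (Fin n))⟫}) /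
                ENNReal.ofReal (r ^ s))
            (𝓝[>] (0 : ℝ)) :=
  nonsymmetric_upper_density_general n s η hs0 hη0 hη1
end

section
/- Let V be a linear subspace of ℝⁿ with orthogonal complement V⊥, and let P denote the orthogonal projection of ℝⁿ onto V⊥. Let 0 < α ≤ 1, ε > 0, r > 0, and let y, z ∈ ℝⁿ with |P(z) − P(y)| < εr. Then every point w ∈ ℝⁿ satisfying |P(w) − P(y)| < εr, |w − z| ≤ 3r, and |w − z| ≥ 4εr/α belongs to X(z, 3r, V, α/2); that is, P⁻¹(B(P(y), εr)) ∩ B(z, 3r) \ B(z, 4εr/α) ⊆ X(z, 3r, V, α/2). -/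
open Metric

/-- The cone `X(x, r, V, α) = {y : dist(y - x, V) < α |y - x|} ∩ B(x, r)`. -/
def coneX {n : ℕ} (x : EuclideanSpace ℝ (Fin n)) (r : ℝ)
    (V : Submodule ℝ (EuclideanSpace ℝ (Fin n))) (α : ℝ) :
    Set (EuclideanSpace ℝ (Fin n)) :=
  {y | Metric.infDist (y - x) (V : Set (EuclideanSpace ℝ (Fin n))) < α * ‖y - x‖} ∩
    closedBall x r

theorem Submodule.infDist_eq_norm_starProjection_orthogonal {𝕜 E : Type*} [RCLike 𝕜]
    [NormedAddCommGroup E] [InnerProductSpace 𝕜 E] (K : Submodule 𝕜 E)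
    [K.HasOrthogonalProjection] (x : E) :
    infDist x K = ‖Kᗮ.starProjection x‖ := by
  rw [infDist_eq_iInf, starProjection_orthogonal_val, starProjection_minimal]
  simp only [dist_eq_norm]
  rfl

theorem mem_coneX_iff {n : ℕ} {x w : EuclideanSpace ℝ (Fin n)} {r α : ℝ}
    {V : Submodule ℝ (EuclideanSpace ℝ (Fin n))} :
    w ∈ coneX x r V α ↔ ‖Vᗮ.starProjection (w - x)‖ < α * ‖w - x‖ ∧ w ∈ closedBall x r := by
  rw [coneX, Set.mem_inter_iff, Set.mem_ofPred_eq,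
    Submodule.infDist_eq_norm_starProjection_orthogonal]

theorem slab_subset_coneX_general (n : ℕ) (V : Submodule ℝ (EuclideanSpace ℝ (Fin n)))
    (α ε r : ℝ) (hα0 : 0 < α)
    (y z : EuclideanSpace ℝ (Fin n))
    (hz : ‖((Submodule.orthogonalProjectionOnto Vᗮ z : Vᗮ) : EuclideanSpace ℝ (Fin n)) -
        ((Submodule.orthogonalProjectionOnto Vᗮ y : Vᗮ) : EuclideanSpace ℝ (Fin n))‖ < ε * r) :
    ∀ w : EuclideanSpace ℝ (Fin n),
      ‖((Submodule.orthogonalProjectionOnto Vᗮ w : Vᗮ) : EuclideanSpace ℝ (Fin n)) -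
          ((Submodule.orthogonalProjectionOnto Vᗮ y : Vᗮ) : EuclideanSpace ℝ (Fin n))‖ < ε * r →
      w ∈ closedBall z (3 * r) →
      w ∉ ball z (4 * ε * r / α) →
      w ∈ coneX z (3 * r) V (α / 2) := by
  intro w hw hw_near hw_far
  simp only [Submodule.coe_orthogonalProjectionOnto_apply] at hz hw
  have hfar : 4 * ε * r / α ≤ ‖w - z‖ := by
    simpa only [mem_ball, dist_eq_norm, not_lt] using hw_far
  set P := Vᗮ.starProjection
  refine mem_coneX_iff.2 ⟨?_, hw_near⟩
  calc ‖P (w - z)‖ = dist (P w) (P z) := by rw [map_sub, dist_eq_norm]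
    _ ≤ dist (P w) (P y) + dist (P z) (P y) := dist_triangle_right _ _ _
    _ < ε * r + ε * r := by rw [dist_eq_norm, dist_eq_norm]; exact add_lt_add hw hz
    _ = α / 2 * (4 * ε * r / α) := by field_simp; ring
    _ ≤ α / 2 * ‖w - z‖ := by gcongr

/-- Let `P` be the orthogonal projection of `ℝⁿ` onto `V⊥`. If `|P z − P y| < ε r`, then
`P⁻¹(B(P y, ε r)) ∩ B(z, 3r) \ B(z, 4 ε r / α) ⊆ X(z, 3r, V, α/2)`. -/
theorem slab_subset_coneX (n : ℕ) (V : Submodule ℝ (EuclideanSpace ℝ (Fin n)))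
    (α ε r : ℝ) (hα0 : 0 < α) (hα1 : α ≤ 1) (hε : 0 < ε) (hr : 0 < r)
    (y z : EuclideanSpace ℝ (Fin n))
    (hz : ‖((Submodule.orthogonalProjectionOnto Vᗮ z : Vᗮ) : EuclideanSpace ℝ (Fin n)) -
        ((Submodule.orthogonalProjectionOnto Vᗮ y : Vᗮ) : EuclideanSpace ℝ (Fin n))‖ < ε * r) :
    ∀ w : EuclideanSpace ℝ (Fin n),
      ‖((Submodule.orthogonalProjectionOnto Vᗮ w : Vᗮ) : EuclideanSpace ℝ (Fin n)) -
          ((Submodule.orthogonalProjectionOnto Vᗮ y : Vᗮ) : EuclideanSpace ℝ (Fin n))‖ < ε * r →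
      w ∈ closedBall z (3 * r) →
      w ∉ ball z (4 * ε * r / α) →
      w ∈ coneX z (3 * r) V (α / 2) :=
  slab_subset_coneX_general n V α ε r hα0 y z hz
end

section
/- Let x ∈ ℝⁿ, r > 0, and √2 − 1 < ϱ < 1/2, and set t = 1/√(1 − 2ϱ) and δ = (1 − ϱ − √(ϱ² + 2ϱ − 1))/√(1 − 2ϱ). If z ∈ ℝⁿ \ {x} satisfies B(z, ϱtr) ⊆ B(x, tr), then, writing θ = (z − x)/|z − x|, one has H(x + δrθ, θ) ∩ B(x, r) ⊆ B(z, ϱtr). -/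
open Metric
open scoped RealInnerProductSpace

/-!
Write `d = |z − x|`, `s = tr` and `q = √(ϱ² + 2ϱ − 1)`, so that `r² = (1 − 2ϱ)s²` and
`δr = (1 − ϱ − q)s`. The inclusion of the balls forces `d + ϱs ≤ s`. For `y` in the half-space and
in `B(x, r)`, expanding `|y − z|² = |y − x|² − 2(y − x)·(z − x) + d²` gives
`|y − z|² ≤ r² − 2δrd + d²`, and `(ϱs)² − (r² − 2δrd + d²) = (qs − d)² + 2d((1 − ϱ)s − d) ≥ 0`.
-/

section Geometry

variable {E : Type*}

theorem dist_add_le_of_closedBall_subset [NormedAddCommGroup E] [NormedSpace ℝ E] {x z : E}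
    {ρ R : ℝ} (hzx : z ≠ x) (hρ : 0 ≤ ρ) (h : closedBall z ρ ⊆ closedBall x R) :
    dist z x + ρ ≤ R := by
  have hd : 0 < ‖z - x‖ := norm_pos_iff.2 (sub_ne_zero.2 hzx)
  -- the point of the sphere around `z` farthest from `x`
  set w := z + (ρ / ‖z - x‖) • (z - x)
  have hw : w ∈ closedBall z ρ := by
    rw [mem_closedBall, dist_eq_norm, add_sub_cancel_left, norm_smul, Real.norm_eq_abs,
      abs_of_nonneg (by positivity), div_mul_cancel₀ _ hd.ne']
  have hwx : w - x = (1 + ρ / ‖z - x‖) • (z - x) := by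
    simp only [w, add_smul, one_smul]; abel
  have := mem_closedBall.1 (h hw)
  rwa [dist_eq_norm, hwx, norm_smul, Real.norm_eq_abs, abs_of_pos (by positivity), add_mul,
    one_mul, div_mul_cancel₀ _ hd.ne', ← dist_eq_norm] at this

variable [NormedAddCommGroup E] [InnerProductSpace ℝ E]

theorem mul_norm_lt_inner_of_inner_sub_pos {x y v : E} {c : ℝ} (hv : v ≠ 0)
    (h : 0 < ⟪y - (x + c • (‖v‖⁻¹ • v)), ‖v‖⁻¹ • v⟫) : c * ‖v‖ < ⟪y - x, v⟫ := by
  have hd : 0 < ‖v‖ := norm_pos_iff.2 hv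
  have hu : ⟪‖v‖⁻¹ • v, ‖v‖⁻¹ • v⟫ = 1 := by
    rw [real_inner_self_eq_norm_sq, norm_smul, norm_inv, norm_norm, inv_mul_cancel₀ hd.ne',
      one_pow]
  rw [sub_add_eq_sub_sub, inner_sub_left, real_inner_smul_left _ _ c, hu, mul_one,
    real_inner_smul_right, sub_pos, lt_inv_mul_iff₀ hd, mul_comm] at h
  exact h

theorem norm_sub_sq_le_of_mul_norm_le_inner {x y z : E} {r c : ℝ} (hy : ‖y - x‖ ≤ r)
    (hc : c * ‖z - x‖ ≤ ⟪y - x, z - x⟫) :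
    ‖y - z‖ ^ 2 ≤ r ^ 2 - 2 * (c * ‖z - x‖) + ‖z - x‖ ^ 2 := by
  have hyx : ‖y - x‖ ^ 2 ≤ r ^ 2 := pow_le_pow_left₀ (norm_nonneg _) hy 2
  rw [← sub_sub_sub_cancel_right y z x, norm_sub_sq_real]
  linarith

end Geometry

theorem sq_sub_two_mul_add_sq_le {ϱ q s d : ℝ} (hq : q ^ 2 = ϱ ^ 2 + 2 * ϱ - 1) (hd0 : 0 ≤ d)
    (hd : d ≤ (1 - ϱ) * s) :
    (1 - 2 * ϱ) * s ^ 2 - 2 * ((1 - ϱ - q) * s * d) + d ^ 2 ≤ (ϱ * s) ^ 2 := by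
  nlinarith [sq_nonneg (q * s - d), mul_nonneg hd0 (sub_nonneg.2 hd)]

/-- Let `√2 − 1 < ϱ < 1/2`, `t = 1/√(1 − 2ϱ)` and
`δ = (1 − ϱ − √(ϱ² + 2ϱ − 1))/√(1 − 2ϱ)`. If `z ≠ x` satisfies `B(z, ϱtr) ⊆ B(x, tr)`,
then, with `θ = (z − x)/|z − x|`, the half space `H(x + δrθ, θ)` intersected with `B(x, r)`
is contained in `B(z, ϱtr)`. -/
theorem halfspace_inter_ball_subset (n : ℕ) (x z : EuclideanSpace ℝ (Fin n))
    (r ϱ t δ : ℝ) (hr : 0 < r) (hϱ1 : Real.sqrt 2 - 1 < ϱ) (hϱ2 : ϱ < 1 / 2)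
    (ht : t = 1 / Real.sqrt (1 - 2 * ϱ))
    (hδ : δ = (1 - ϱ - Real.sqrt (ϱ ^ 2 + 2 * ϱ - 1)) / Real.sqrt (1 - 2 * ϱ))
    (hzx : z ≠ x)
    (hball : closedBall z (ϱ * t * r) ⊆ closedBall x (t * r)) :
    {y : EuclideanSpace ℝ (Fin n) |
        0 < ⟪y - (x + (δ * r) • (‖z - x‖⁻¹ • (z - x))), ‖z - x‖⁻¹ • (z - x)⟫} ∩
      closedBall x r ⊆ closedBall z (ϱ * t * r) := by
  rintro y ⟨hy_half, hy_ball⟩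
  set q := Real.sqrt (ϱ ^ 2 + 2 * ϱ - 1)
  have hq : q ^ 2 = ϱ ^ 2 + 2 * ϱ - 1 := by
    refine Real.sq_sqrt ?_
    linarith [Real.lt_sq_of_sqrt_lt (by linarith : Real.sqrt 2 < ϱ + 1)]
  have hϱ0 : 0 < ϱ := by linarith [Real.one_lt_sqrt_two]
  have h12 : 0 < 1 - 2 * ϱ := by linarith
  have ht0 : 0 < t := by rw [ht]; exact one_div_pos.2 (Real.sqrt_pos.2 h12)
  have hr_sq : r ^ 2 = (1 - 2 * ϱ) * (t * r) ^ 2 := by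
    rw [ht, mul_pow, div_pow, Real.sq_sqrt h12.le]; field_simp
  have hδr : δ * r = (1 - ϱ - q) * (t * r) := by rw [hδ, ht]; ring
  have hdist := dist_add_le_of_closedBall_subset hzx (by positivity) hball
  rw [dist_eq_norm] at hdist
  have hinner := mul_norm_lt_inner_of_inner_sub_pos (sub_ne_zero.2 hzx) hy_half
  have hsq := norm_sub_sq_le_of_mul_norm_le_inner (mem_closedBall_iff_norm.1 hy_ball) hinner.le
  rw [hr_sq, hδr] at hsq
  have hquad := sq_sub_two_mul_add_sq_le hq (s := t * r) (norm_nonneg (z - x)) (by linarith)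
  rw [mem_closedBall_iff_norm, mul_assoc, ← sq_le_sq₀ (norm_nonneg _) (by positivity)]
  exact hsq.trans hquad
end

section
/- Let n ≥ 1 and l ≥ 1 be integers and let s > 0 be a real number satisfying (2ⁿ − 1) · Σ_{i=1}^{l} 2^{−is} = 1. Then s ≤ n − (2/(5 log 2)) · 2^{−ln}. -/
/-!
Put `r = 2^{-s}`. Multiplying the defining equation by `1 - r` telescopes the geometric sum and
gives `2^{n-s} - 1 = (2ⁿ - 1) r^{l+1}`. The right-hand side is positive, so `r > 2^{-n}`, and
then it is at least `(2ⁿ - 1) 2^{-n(l+1)} ≥ 2^{-ln}/2`. Taking logarithms,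
`(n - s) log 2 ≥ log (1 + 2^{-ln}/2) ≥ (2/5) 2^{-ln}`.
-/

open Finset Real

theorem mul_sub_one_eq_sub_one_mul_pow_succ {R : Type*} [CommRing R] {a r : R} {l : ℕ}
    (h : (a - 1) * ∑ i ∈ Icc 1 l, r ^ i = 1) : a * r - 1 = (a - 1) * r ^ (l + 1) := by
  have hgeom := geom_sum_Ico_mul r (Nat.le_add_left 1 l)
  rw [Finset.Ico_add_one_right_eq_Icc] at hgeom
  linear_combination (a - 1) * hgeom - (r - 1) * h

theorem inv_pow_div_two_le_mul_sub_one {a r : ℝ} {l : ℕ} (ha : 2 ≤ a) (hr : 0 < r)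
    (h : a * r - 1 = (a - 1) * r ^ (l + 1)) : (a ^ l)⁻¹ / 2 ≤ a * r - 1 := by
  have ha0 : 0 < a := by linarith
  have hinv : a⁻¹ < r := by
    rw [inv_lt_iff_one_lt_mul₀' ha0]
    nlinarith [mul_pos (sub_pos.2 (by linarith : 1 < a)) (pow_pos hr (l + 1))]
  calc (a ^ l)⁻¹ / 2 = a / 2 * a⁻¹ ^ (l + 1) := by rw [inv_pow]; field_simp; ring
    _ ≤ (a - 1) * r ^ (l + 1) :=
      mul_le_mul (by linarith) (pow_le_pow_left₀ (by positivity) hinv.le _) (by positivity)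
        (by linarith)
    _ = a * r - 1 := h.symm

theorem four_fifths_mul_le_log_one_add {x : ℝ} (hx0 : 0 ≤ x) (hx : x ≤ 1 / 2) :
    4 / 5 * x ≤ log (1 + x) :=
  calc 4 / 5 * x ≤ 2 * x / (x + 2) := by rw [le_div_iff₀ (by linarith)]; nlinarith
    _ ≤ log (1 + x) := le_log_one_add_of_nonneg hx0

theorem similarity_dim_bound_general (n l : ℕ) (hn : 1 ≤ n) (s : ℝ)
    (heq : ((2 : ℝ) ^ n - 1) * ∑ i ∈ Finset.Icc 1 l, (2 : ℝ) ^ (-(i : ℝ) * s) = 1) :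
    s ≤ (n : ℝ) - 2 / (5 * Real.log 2) * (2 : ℝ) ^ (-((l : ℝ) * (n : ℝ))) := by
  set r : ℝ := 2 ^ (-s)
  have hsum : ∑ i ∈ Icc 1 l, (2 : ℝ) ^ (-(i : ℝ) * s) = ∑ i ∈ Icc 1 l, r ^ i :=
    sum_congr rfl fun i _ => by rw [← rpow_mul_natCast zero_le_two]; ring_nf
  have ha : (2 : ℝ) ≤ 2 ^ n := by simpa using pow_le_pow_right₀ one_le_two hn
  have hdefect := inv_pow_div_two_le_mul_sub_one ha (by positivity)
    (mul_sub_one_eq_sub_one_mul_pow_succ (hsum ▸ heq))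
  have ht : (2 : ℝ) ^ (-((l : ℝ) * n)) = (((2 : ℝ) ^ n) ^ l)⁻¹ := by
    rw [rpow_neg zero_le_two, ← pow_mul, mul_comm n, ← rpow_natCast]; push_cast; rfl
  have ht1 : (((2 : ℝ) ^ n) ^ l)⁻¹ ≤ 1 := inv_le_one_of_one_le₀ (one_le_pow₀ (by linarith))
  have hlog : log (2 ^ n * r) = (n - s) * log 2 := by
    rw [log_mul (by positivity) (by positivity), log_pow, log_rpow two_pos]; ring
  have hmain : 2 / 5 * (((2 : ℝ) ^ n) ^ l)⁻¹ ≤ (n - s) * log 2 :=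
    calc 2 / 5 * (((2 : ℝ) ^ n) ^ l)⁻¹ = 4 / 5 * ((((2 : ℝ) ^ n) ^ l)⁻¹ / 2) := by ring
      _ ≤ log (1 + (((2 : ℝ) ^ n) ^ l)⁻¹ / 2) :=
        four_fifths_mul_le_log_one_add (by positivity) (by linarith)
      _ ≤ log (2 ^ n * r) := log_le_log (by positivity) (by linarith)
      _ = (n - s) * log 2 := hlog
  rw [ht, le_sub_comm, show 2 / (5 * log 2) * (((2 : ℝ) ^ n) ^ l)⁻¹
    = 2 / 5 * (((2 : ℝ) ^ n) ^ l)⁻¹ / log 2 by ring]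
  exact (div_le_iff₀ (log_pos one_lt_two)).2 hmain

/-- If `s > 0` satisfies the similarity dimension equation
`(2ⁿ − 1) · Σ_{i=1}^{l} 2^{−is} = 1` for integers `n, l ≥ 1`, then
`s ≤ n − (2/(5 log 2)) · 2^{−ln}`. -/
theorem similarity_dim_bound (n l : ℕ) (hn : 1 ≤ n) (hl : 1 ≤ l) (s : ℝ) (hs : 0 < s)
    (heq : ((2 : ℝ) ^ n - 1) * ∑ i ∈ Finset.Icc 1 l, (2 : ℝ) ^ (-(i : ℝ) * s) = 1) :
    s ≤ (n : ℝ) - 2 / (5 * Real.log 2) * (2 : ℝ) ^ (-((l : ℝ) * (n : ℝ))) :=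
  similarity_dim_bound_general n l hn s heq
end
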